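/- arXiv:2503.07145 — 4 statements merged into one kernel-verified Lean document; each statement's English description precedes it below -/
import Mathlib

section
/- Let x ∈ ℝ^n be an irreducible score. Then the entropy function H(M) = ∑_{i,j=1}^n m_{ij} log m_{ij} (with the convention 0·log 0 = 0) admits a unique minimizer on Θ_n(x), and all entries of this minimizer are strictly positive. -/
open Finset

/-- `Θ_n(x)`: doubly stochastic matrices whose rows, viewed as measures
`μ_i = ∑_j m_{ij} δ_{j-1}`, have barycenter `x_i`. -/
def Theta (n : ℕ) (x : Fin n → ℝ) : Set (Fin n → Fin n → ℝ) :=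
  {M | (∀ i j, 0 ≤ M i j) ∧ (∀ i, ∑ j, M i j = 1) ∧ (∀ j, ∑ i, M i j = 1) ∧
    (∀ i, ∑ j : Fin n, ((j : ℕ) : ℝ) * M i j = x i)}

/-- The entropy `H(M) = ∑_{i,j} m_{ij} log m_{ij}` (note `Real.log 0 = 0`). -/
noncomputable def entropyH (n : ℕ) (M : Fin n → Fin n → ℝ) : ℝ :=
  ∑ i, ∑ j, M i j * Real.log (M i j)

/-! ### Auxiliary lemmas -/

/-- Gauss sum in `ℝ`. -/
lemma gauss_sum_real (N : ℕ) : ∑ k ∈ Finset.range N, (k : ℝ) = N * (N - 1) / 2 := by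
  induction N with
  | zero => simp
  | succ N ih => rw [Finset.sum_range_succ, ih]; push_cast; ring


lemma sum_filter_lt_val (n k : ℕ) (hk : k ≤ n) :
    ∑ i ∈ Finset.univ.filter (fun i : Fin n => (i:ℕ) < k), ((i:ℕ):ℝ) =
      (k:ℝ) * ((k:ℝ) - 1) / 2 := by
  rw [Finset.sum_filter, Fin.sum_univ_eq_sum_range (fun j => if j < k then ((j:ℕ):ℝ) else 0)]
  rw [← Finset.sum_subset (Finset.range_subset_range.2 hk) (fun j _ hj => by
    simp only [Finset.mem_range, not_lt] at hj
    simp [Nat.not_lt.2 hj])]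
  rw [← gauss_sum_real k]
  exact Finset.sum_congr rfl fun j hj => by simp [Finset.mem_range.1 hj]

lemma card_filter_lt_val (n k : ℕ) (hk : k ≤ n) :
    (Finset.univ.filter (fun i : Fin n => (i:ℕ) < k)).card = k := by
  rw [Finset.card_filter, Fin.sum_univ_eq_sum_range (fun j => if j < k then 1 else 0)]
  rw [← Finset.sum_subset (Finset.range_subset_range.2 hk) (fun j _ hj => by
    simp only [Finset.mem_range, not_lt] at hj
    simp [Nat.not_lt.2 hj])]
  rw [Finset.sum_ite_of_true (fun j hj => Finset.mem_range.1 hj)]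
  simp

lemma Iic_eq_filter_lt {n : ℕ} (m : Fin n) :
    Finset.Iic m = Finset.univ.filter (fun i : Fin n => (i:ℕ) < (m:ℕ) + 1) := by
  ext i
  simp only [Finset.mem_Iic, Finset.mem_filter, Finset.mem_univ, true_and, Fin.le_def,
    Nat.lt_succ_iff]

/-- Hardy–Littlewood–Pólya style construction: if `x` is monotone, dominates the
partial sums of `y` and has the same total sum, then `x = M y` for a doubly
stochastic `M`. -/
lemma hlp (n : ℕ) : ∀ (d : ℕ) (x y : Fin n → ℝ),
    (Finset.univ.filter fun i => x i ≠ y i).card ≤ d →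
    Monotone x →
    (∀ m : Fin n, ∑ i ∈ Finset.Iic m, y i ≤ ∑ i ∈ Finset.Iic m, x i) →
    (∑ i, x i = ∑ i, y i) →
    ∃ M : Fin n → Fin n → ℝ, (∀ i j, 0 ≤ M i j) ∧ (∀ i, ∑ j, M i j = 1) ∧
      (∀ j, ∑ i, M i j = 1) ∧ (∀ i, ∑ j, M i j * y j = x i) := by
  have hid : ∀ y : Fin n → ℝ, ∃ M : Fin n → Fin n → ℝ,
      (∀ i j, 0 ≤ M i j) ∧ (∀ i, ∑ j, M i j = 1) ∧
      (∀ j, ∑ i, M i j = 1) ∧ (∀ i, ∑ j, M i j * y j = y i) := by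
    intro y
    refine ⟨fun i j => if i = j then 1 else 0, ?_, ?_, ?_, ?_⟩
    · intro i j; dsimp only; split <;> norm_num
    · intro i; simp
    · intro j; simp
    · intro i
      have hterm : ∀ j, (if i = j then (1:ℝ) else 0) * y j =
          if j = i then y j else 0 := by
        intro j
        rcases eq_or_ne i j with rfl | hij
        · simp
        · simp [hij, Ne.symm hij]
      rw [Finset.sum_congr rfl fun j _ => hterm j, Finset.sum_ite_eq' Finset.univ i y]
      simp
  intro d
  induction d with
  | zero =>
    intro x y hcard hmono hbot htot
    have hxy : x = y := by
      funext i
      by_contra hne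
      have hmem : i ∈ Finset.univ.filter fun i => x i ≠ y i := by simp [hne]
      have := Finset.card_pos.2 ⟨i, hmem⟩
      omega
    subst hxy
    exact hid x
  | succ d ih =>
    intro x y hcard hmono hbot htot
    by_cases hxy : x = y
    · subst hxy
      exact hid x
    -- existence of b, the least index where x < y
    have hBne : (Finset.univ.filter fun i => x i < y i).Nonempty := by
      by_contra hB
      rw [Finset.not_nonempty_iff_eq_empty, Finset.filter_eq_empty_iff] at hB
      have hpt : ∀ i, y i ≤ x i := fun i => not_lt.1 (hB (Finset.mem_univ i))
      have heq := (Finset.sum_eq_sum_iff_of_le fun i (_ : i ∈ Finset.univ) => hpt i).1 htot.symm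
      exact hxy (funext fun i => (heq i (Finset.mem_univ i)).symm)
    set b := (Finset.univ.filter fun i => x i < y i).min' hBne with hbdef
    have hbmem : x b < y b := by
      have := (Finset.univ.filter fun i => x i < y i).min'_mem hBne
      rw [← hbdef] at this
      exact (Finset.mem_filter.1 this).2
    have hbmin : ∀ i, x i < y i → b ≤ i := by
      intro i hi
      exact Finset.min'_le _ _ (Finset.mem_filter.2 ⟨Finset.mem_univ i, hi⟩)
    -- existence of a, the largest index below b where y < x
    have hAne : (Finset.univ.filter fun i => i < b ∧ y i < x i).Nonempty := by
      by_contra hA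
      rw [Finset.not_nonempty_iff_eq_empty, Finset.filter_eq_empty_iff] at hA
      have hpt : ∀ i, i < b → x i = y i := by
        intro i hib
        have h1 : ¬ y i < x i := fun h => hA (Finset.mem_univ i) ⟨hib, h⟩
        have h2 : ¬ x i < y i := fun h => absurd (hbmin i h) (not_le.2 hib)
        linarith [not_lt.1 h1, not_lt.1 h2]
      have hlt : ∑ i ∈ Finset.Iic b, x i < ∑ i ∈ Finset.Iic b, y i := by
        refine Finset.sum_lt_sum (fun i hi => ?_) ⟨b, Finset.mem_Iic.2 le_rfl, hbmem⟩
        rcases lt_or_eq_of_le (Finset.mem_Iic.1 hi) with h | h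
        · exact le_of_eq (hpt i h)
        · subst h; exact le_of_lt hbmem
      linarith [hbot b]
    set a := (Finset.univ.filter fun i => i < b ∧ y i < x i).max' hAne with hadef
    have hamem : a < b ∧ y a < x a := by
      have := (Finset.univ.filter fun i => i < b ∧ y i < x i).max'_mem hAne
      rw [← hadef] at this
      exact (Finset.mem_filter.1 this).2
    have hamax : ∀ i, i < b → y i < x i → i ≤ a := by
      intro i h1 h2
      exact Finset.le_max' _ _ (Finset.mem_filter.2 ⟨Finset.mem_univ i, h1, h2⟩)
    obtain ⟨hab, hyaxa⟩ := hamem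
    have hab_ne : a ≠ b := ne_of_lt hab
    have hmid : ∀ i, a < i → i < b → x i = y i := by
      intro i hai hib
      have h2 : ¬ x i < y i := fun h => absurd (hbmin i h) (not_le.2 hib)
      have h1 : ¬ y i < x i := fun h => absurd (hamax i hib h) (not_le.2 hai)
      linarith [not_lt.1 h1, not_lt.1 h2]
    have hxab : x a ≤ x b := hmono (le_of_lt hab)
    have hyab : y a < y b := by linarith [hbmem]
    set δ : ℝ := min (x a - y a) (y b - x b) with hδdef
    have hδ1 : δ ≤ x a - y a := min_le_left _ _
    have hδ2 : δ ≤ y b - x b := min_le_right _ _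
    have hδpos : 0 < δ := lt_min (by linarith) (by linarith)
    set l : ℝ := δ / (y b - y a) with hldef
    have hyba : 0 < y b - y a := by linarith
    have hl0 : 0 < l := div_pos hδpos hyba
    have hl1 : l ≤ 1 := by
      rw [hldef, div_le_one hyba]
      linarith
    have hlyy : l * (y b - y a) = δ := div_mul_cancel₀ δ (ne_of_gt hyba)
    set y' : Fin n → ℝ :=
      fun j => y j + (if j = a then δ else 0) - (if j = b then δ else 0) with hy'def
    have hy'a : y' a = y a + δ := by simp [hy'def, hab_ne]
    have hy'b : y' b = y b - δ := by simp [hy'def, Ne.symm hab_ne]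
    have hy'o : ∀ j, j ≠ a → j ≠ b → y' j = y j := by
      intro j h1 h2; simp [hy'def, h1, h2]
    -- the new discrepancy set is smaller
    have hsub : (Finset.univ.filter fun i => x i ≠ y' i) ⊆
        Finset.univ.filter fun i => x i ≠ y i := by
      intro i hi
      simp only [Finset.mem_filter, Finset.mem_univ, true_and] at hi ⊢
      intro hxeq
      rcases eq_or_ne i a with rfl | hia
      · linarith
      rcases eq_or_ne i b with rfl | hib
      · linarith [hbmem]
      · exact hi (by rw [hy'o i hia hib, hxeq])
    have hcard' : (Finset.univ.filter fun i => x i ≠ y' i).card ≤ d := by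
      obtain ⟨w, hwold, hwnew⟩ : ∃ w, (w ∈ Finset.univ.filter fun i => x i ≠ y i) ∧
          (w ∉ Finset.univ.filter fun i => x i ≠ y' i) := by
        rcases le_total (x a - y a) (y b - x b) with hca | hca
        · refine ⟨a, ?_, ?_⟩
          · simp only [Finset.mem_filter, Finset.mem_univ, true_and]
            intro h; linarith
          · simp only [Finset.mem_filter, Finset.mem_univ, true_and, not_not]
            rw [hy'a, hδdef, min_eq_left hca]
            ring
        · refine ⟨b, ?_, ?_⟩
          · simp only [Finset.mem_filter, Finset.mem_univ, true_and]
            intro h; linarith [hbmem]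
          · simp only [Finset.mem_filter, Finset.mem_univ, true_and, not_not]
            rw [hy'b, hδdef, min_eq_right hca]
            ring
      have h1 := Finset.card_le_card (Finset.subset_erase.2 ⟨hsub, hwnew⟩)
      rw [Finset.card_erase_of_mem hwold] at h1
      omega
    -- partial sums still dominated
    have hsumy' : ∀ m : Fin n, ∑ i ∈ Finset.Iic m, y' i =
        (∑ i ∈ Finset.Iic m, y i) + (if a ≤ m then δ else 0) - (if b ≤ m then δ else 0) := by
      intro m
      simp only [hy'def]
      rw [Finset.sum_sub_distrib, Finset.sum_add_distrib,
        Finset.sum_ite_eq' (Finset.Iic m) a (fun _ => δ),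
        Finset.sum_ite_eq' (Finset.Iic m) b (fun _ => δ)]
      simp [Finset.mem_Iic]
    have hbot' : ∀ m : Fin n, ∑ i ∈ Finset.Iic m, y' i ≤ ∑ i ∈ Finset.Iic m, x i := by
      intro m
      rw [hsumy' m]
      by_cases hbm : b ≤ m
      · have ham : a ≤ m := le_of_lt (lt_of_lt_of_le hab hbm)
        rw [if_pos ham, if_pos hbm]
        linarith [hbot m]
      · rw [if_neg hbm]
        by_cases ham : a ≤ m
        · rw [if_pos ham]
          have hmb : m < b := not_le.1 hbm
          have hsub2 : Finset.Iic m ⊆ Finset.Iic b := Finset.Iic_subset_Iic.2 (le_of_lt hmb)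
          have hdiff : ∑ i ∈ Finset.Iic b \ Finset.Iic m, (x i - y i) = x b - y b := by
            apply Finset.sum_eq_single_of_mem b
            · simp only [Finset.mem_sdiff, Finset.mem_Iic]
              exact ⟨le_rfl, not_le.2 hmb⟩
            · intro i hi hib
              simp only [Finset.mem_sdiff, Finset.mem_Iic] at hi
              have hai : a < i := lt_of_le_of_lt ham (not_le.1 hi.2)
              have hib' : i < b := lt_of_le_of_ne hi.1 hib
              rw [hmid i hai hib']
              ring
          have h8 : ∑ i ∈ Finset.Iic b \ Finset.Iic m, (x i - y i) =
              (∑ i ∈ Finset.Iic b, (x i - y i)) - ∑ i ∈ Finset.Iic m, (x i - y i) :=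
            Finset.sum_sdiff_eq_sub hsub2
          rw [hdiff] at h8
          have h9 : 0 ≤ ∑ i ∈ Finset.Iic b, (x i - y i) := by
            rw [Finset.sum_sub_distrib]
            linarith [hbot b]
          have h10 : ∑ i ∈ Finset.Iic m, (x i - y i) =
              (∑ i ∈ Finset.Iic m, x i) - ∑ i ∈ Finset.Iic m, y i := Finset.sum_sub_distrib x y
          rw [h10] at h8
          linarith
        · rw [if_neg ham]
          linarith [hbot m]
    have htot' : ∑ i, x i = ∑ i, y' i := by
      simp only [hy'def]
      rw [Finset.sum_sub_distrib, Finset.sum_add_distrib,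
        Finset.sum_ite_eq' Finset.univ a (fun _ => δ),
        Finset.sum_ite_eq' Finset.univ b (fun _ => δ)]
      simp [htot]
    obtain ⟨M', hM'0, hM'1, hM'2, hM'3⟩ := ih x y' hcard' hmono hbot' htot'
    set M : Fin n → Fin n → ℝ := fun i j => M' i j +
        (if j = a then l * (M' i b - M' i a) else 0) +
        (if j = b then l * (M' i a - M' i b) else 0) with hMdef
    refine ⟨M, ?_, ?_, ?_, ?_⟩
    · intro i j
      by_cases hja : j = a
      · have hpt : M i j = M' i a + l * (M' i b - M' i a) := by
          simp [hMdef, hja, hab_ne]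
        rw [hpt]
        nlinarith [hM'0 i a, hM'0 i b, hl0.le, hl1]
      by_cases hjb : j = b
      · have hpt : M i j = M' i b + l * (M' i a - M' i b) := by
          simp [hMdef, hjb, Ne.symm hab_ne]
        rw [hpt]
        nlinarith [hM'0 i b, hM'0 i a, hl0.le, hl1]
      · have hpt : M i j = M' i j := by simp [hMdef, hja, hjb]
        rw [hpt]
        exact hM'0 i j
    · intro i
      simp only [hMdef]
      rw [Finset.sum_add_distrib, Finset.sum_add_distrib,
        Finset.sum_ite_eq' Finset.univ a (fun _ => l * (M' i b - M' i a)),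
        Finset.sum_ite_eq' Finset.univ b (fun _ => l * (M' i a - M' i b)), hM'1 i]
      simp only [Finset.mem_univ, if_true]
      ring
    · intro j
      by_cases hja : j = a
      · have hpt : ∀ i, M i j = M' i a + l * (M' i b - M' i a) := by
          intro i; simp [hMdef, hja, hab_ne]
        rw [Finset.sum_congr rfl fun i _ => hpt i, Finset.sum_add_distrib,
          ← Finset.mul_sum, Finset.sum_sub_distrib, hM'2 a, hM'2 b]
        ring
      by_cases hjb : j = b
      · have hpt : ∀ i, M i j = M' i b + l * (M' i a - M' i b) := by
          intro i; simp [hMdef, hjb, Ne.symm hab_ne]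
        rw [Finset.sum_congr rfl fun i _ => hpt i, Finset.sum_add_distrib,
          ← Finset.mul_sum, Finset.sum_sub_distrib, hM'2 a, hM'2 b]
        ring
      · have hpt : ∀ i, M i j = M' i j := by
          intro i; simp [hMdef, hja, hjb]
        rw [Finset.sum_congr rfl fun i _ => hpt i, hM'2 j]
    · intro i
      have hexp : ∑ j, M' i j * y' j = (∑ j, M' i j * y j) + M' i a * δ - M' i b * δ := by
        simp only [hy'def]
        have hterm : ∀ j, M' i j * (y j + (if j = a then δ else 0) - (if j = b then δ else 0)) =
            M' i j * y j + (if j = a then M' i j * δ else 0) -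
              (if j = b then M' i j * δ else 0) := by
          intro j
          split_ifs <;> ring
        rw [Finset.sum_congr rfl fun j _ => hterm j, Finset.sum_sub_distrib,
          Finset.sum_add_distrib,
          Finset.sum_ite_eq' Finset.univ a (fun j => M' i j * δ),
          Finset.sum_ite_eq' Finset.univ b (fun j => M' i j * δ)]
        simp
      have hexp2 : ∑ j, M i j * y j = (∑ j, M' i j * y j)
          + l * (M' i b - M' i a) * y a + l * (M' i a - M' i b) * y b := by
        simp only [hMdef]
        have hterm : ∀ j, (M' i j + (if j = a then l * (M' i b - M' i a) else 0) +
            (if j = b then l * (M' i a - M' i b) else 0)) * y j =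
            M' i j * y j + (if j = a then l * (M' i b - M' i a) * y j else 0) +
              (if j = b then l * (M' i a - M' i b) * y j else 0) := by
          intro j
          split_ifs <;> ring
        rw [Finset.sum_congr rfl fun j _ => hterm j, Finset.sum_add_distrib,
          Finset.sum_add_distrib,
          Finset.sum_ite_eq' Finset.univ a (fun j => l * (M' i b - M' i a) * y j),
          Finset.sum_ite_eq' Finset.univ b (fun j => l * (M' i a - M' i b) * y j)]
        simp
      rw [hexp2]
      have h10 := hM'3 i
      rw [hexp] at h10
      linear_combination h10 + (M' i a - M' i b) * hlyy

/-- There is a strictly positive element of `Theta n x`. -/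
lemma exists_pos_theta (n : ℕ) (x : Fin n → ℝ)
    (hx : Monotone x)
    (hsum : ∑ i, x i = (n * (n - 1) / 2 : ℝ))
    (hirr : ∀ k : ℕ, 1 ≤ k → k < n →
      (k * (k - 1) / 2 : ℝ) <
        ∑ i ∈ Finset.univ.filter (fun i : Fin n => (i : ℕ) < k), x i) :
    ∃ P ∈ Theta n x, ∀ i j, 0 < P i j := by
  rcases Nat.eq_zero_or_pos n with hn | hn
  · subst hn
    exact ⟨fun _ _ => 1, ⟨fun i => i.elim0, fun i => i.elim0, fun j => j.elim0,
      fun i => i.elim0⟩, fun i => i.elim0⟩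
  -- the filtered partial sums of x
  set S : ℕ → ℝ := fun k => ∑ i ∈ Finset.univ.filter (fun i : Fin n => (i:ℕ) < k), x i with hS
  set δ : ℕ → ℝ := fun k => S k - (k:ℝ) * ((k:ℝ) - 1) / 2 with hδ
  set f : ℕ → ℝ := fun k => if k = 0 then 1/2 else δ k / (n:ℝ)^2 with hf
  have hne : (Finset.range n).Nonempty := ⟨0, Finset.mem_range.2 hn⟩
  set ε : ℝ := (Finset.range n).inf' hne f with hε
  have hfpos : ∀ k ∈ Finset.range n, 0 < f k := by
    intro k hk
    rw [Finset.mem_range] at hk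
    rcases Nat.eq_zero_or_pos k with rfl | hk1
    · norm_num [hf]
    · have hδk : 0 < δ k := by
        have := hirr k hk1 hk
        simp only [hδ, hS]
        linarith
      simp only [hf]
      rw [if_neg (by omega : ¬ k = 0)]
      exact div_pos hδk (by positivity)
  have hε0 : 0 < ε := by
    rw [hε, Finset.lt_inf'_iff]
    exact hfpos
  have hεhalf : ε ≤ 1/2 := by
    have h0 := Finset.inf'_le f (Finset.mem_range.2 hn : 0 ∈ Finset.range n)
    have hf0 : f 0 = 1/2 := by simp [hf]
    rw [hf0] at h0
    exact h0
  have h1ε : 0 < 1 - ε := by linarith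
  have hεk : ∀ k : ℕ, 1 ≤ k → k < n → ε ≤ δ k / (n:ℝ)^2 := by
    intro k hk1 hkn
    have h0 := Finset.inf'_le f (Finset.mem_range.2 hkn : k ∈ Finset.range n)
    have hfk : f k = δ k / (n:ℝ)^2 := by
      simp only [hf]
      rw [if_neg (by omega : ¬ k = 0)]
    rw [hfk] at h0
    exact h0
  have hnpos : (0:ℝ) < (n:ℝ) := by exact_mod_cast hn
  have hne1 : (1:ℝ) - ε ≠ 0 := ne_of_gt h1ε
  -- the modified score
  set d : ℝ := ε * ((n:ℝ) - 1) / 2 with hd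
  set y : Fin n → ℝ := fun i => (x i - d) / (1 - ε) with hy
  have hymono : Monotone y := by
    intro i i' hii'
    simp only [hy]
    rw [div_le_div_iff₀ h1ε h1ε]
    nlinarith [hx hii']
  have hStotal : S n = (n:ℝ) * ((n:ℝ)-1)/2 := by
    have hfil : Finset.univ.filter (fun i : Fin n => (i:ℕ) < n) = Finset.univ := by
      apply Finset.filter_true_of_mem
      intro i _
      exact i.isLt
    rw [hS]
    simp only [hfil]
    exact hsum
  have hSk : ∀ k : ℕ, 1 ≤ k → k ≤ n →
      (k:ℝ)*((k:ℝ)-1)/2 + ε*(k:ℝ)*((n:ℝ)-(k:ℝ))/2 ≤ S k := by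
    intro k hk1 hkn
    rcases eq_or_lt_of_le hkn with rfl | hlt
    · rw [hStotal]
      have hz : ε*(k:ℝ)*((k:ℝ)-(k:ℝ))/2 = 0 := by ring
      linarith
    · have h1 := hεk k hk1 hlt
      have hn2 : (0:ℝ) < (n:ℝ)^2 := by positivity
      have h2 : ε * (n:ℝ)^2 ≤ δ k := (le_div_iff₀ hn2).1 h1
      have hkR : (1:ℝ) ≤ (k:ℝ) := by exact_mod_cast hk1
      have hknR : (k:ℝ) ≤ (n:ℝ) := by exact_mod_cast hkn
      have h3 : (k:ℝ)*((n:ℝ)-(k:ℝ))/2 ≤ (n:ℝ)^2 := by nlinarith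
      have h5 : δ k = S k - (k:ℝ)*((k:ℝ)-1)/2 := rfl
      rw [h5] at h2
      linarith [mul_le_mul_of_nonneg_left h3 hε0.le]
  have hsumy : ∀ m : Fin n, ∑ i ∈ Finset.Iic m, y i
      = (S ((m:ℕ)+1) - (((m:ℕ):ℝ)+1) * d) / (1 - ε) := by
    intro m
    have hm1 : (m:ℕ) + 1 ≤ n := m.isLt
    rw [Iic_eq_filter_lt]
    simp only [hy]
    rw [← Finset.sum_div, Finset.sum_sub_distrib, Finset.sum_const, nsmul_eq_mul,
      card_filter_lt_val n _ hm1]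
    simp only [hS]
    push_cast
    ring
  have hbot : ∀ m : Fin n, ∑ i ∈ Finset.Iic m, ((i:ℕ):ℝ) ≤ ∑ i ∈ Finset.Iic m, y i := by
    intro m
    have hm1 : (m:ℕ) + 1 ≤ n := m.isLt
    rw [hsumy m, Iic_eq_filter_lt, sum_filter_lt_val n _ hm1]
    rw [le_div_iff₀ h1ε]
    have h6 := hSk ((m:ℕ)+1) (by omega) hm1
    set K : ℝ := ((m:ℕ):ℝ) + 1 with hK
    have hKcast : (((m:ℕ)+1 : ℕ):ℝ) = K := by push_cast; rw [hK]
    rw [hKcast] at h6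
    have hiden : (K * (K-1)/2) * (1-ε) + K * d
        = K*(K-1)/2 + ε*K*((n:ℝ)-K)/2 := by rw [hd]; ring
    have hcast2 : (((m:ℕ)+1 : ℕ):ℝ) * ((((m:ℕ)+1 : ℕ):ℝ) - 1) / 2 = K * (K-1)/2 := by
      rw [hKcast]
    rw [hcast2]
    linarith
  have hc : ∑ j : Fin n, ((j:ℕ):ℝ) = (n:ℝ)*((n:ℝ)-1)/2 := by
    rw [Fin.sum_univ_eq_sum_range (fun j => ((j:ℕ):ℝ))]
    exact gauss_sum_real n
  have htoty : ∑ i, y i = ∑ j : Fin n, ((j:ℕ):ℝ) := by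
    simp only [hy]
    rw [← Finset.sum_div, Finset.sum_sub_distrib, Finset.sum_const, nsmul_eq_mul, hsum, hc]
    simp only [Finset.card_univ, Fintype.card_fin]
    rw [hd]
    field_simp
  obtain ⟨M0, hM00, hM01, hM02, hM03⟩ := hlp n
    ((Finset.univ.filter fun i => y i ≠ ((i:ℕ):ℝ)).card) y (fun j : Fin n => ((j:ℕ):ℝ))
    le_rfl hymono hbot htoty
  have hεn : 0 < ε / (n:ℝ) := div_pos hε0 hnpos
  refine ⟨fun i j => (1-ε) * M0 i j + ε / (n:ℝ), ⟨?_, ?_, ?_, ?_⟩, ?_⟩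
  · intro i j
    have := mul_nonneg h1ε.le (hM00 i j)
    linarith
  · intro i
    rw [Finset.sum_add_distrib, ← Finset.mul_sum, hM01, Finset.sum_const, nsmul_eq_mul]
    simp only [Finset.card_univ, Fintype.card_fin]
    field_simp
    ring
  · intro j
    rw [Finset.sum_add_distrib, ← Finset.mul_sum, hM02, Finset.sum_const, nsmul_eq_mul]
    simp only [Finset.card_univ, Fintype.card_fin]
    field_simp
    ring
  · intro i
    calc ∑ j : Fin n, ((j:ℕ):ℝ) * ((1-ε) * M0 i j + ε/(n:ℝ))
        = (1-ε) * (∑ j, M0 i j * ((j:ℕ):ℝ)) + (ε/(n:ℝ)) * ∑ j : Fin n, ((j:ℕ):ℝ) := by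
          rw [Finset.mul_sum, Finset.mul_sum, ← Finset.sum_add_distrib]
          exact Finset.sum_congr rfl fun j _ => by ring
      _ = x i := by
          rw [hM03 i, hc]
          simp only [hy, hd]
          field_simp
          ring
  · intro i j
    have := mul_nonneg h1ε.le (hM00 i j)
    linarith

lemma theta_convex (n : ℕ) (x : Fin n → ℝ) : Convex ℝ (Theta n x) := by
  rintro A ⟨hA0, hA1, hA2, hA3⟩ B ⟨hB0, hB1, hB2, hB3⟩ a b ha hb hab
  refine ⟨fun i j => ?_, fun i => ?_, fun j => ?_, fun i => ?_⟩
  · simp only [Pi.add_apply, Pi.smul_apply, smul_eq_mul]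
    exact add_nonneg (mul_nonneg ha (hA0 i j)) (mul_nonneg hb (hB0 i j))
  · simp only [Pi.add_apply, Pi.smul_apply, smul_eq_mul]
    rw [Finset.sum_add_distrib, ← Finset.mul_sum, ← Finset.mul_sum, hA1, hB1]
    simpa using hab
  · simp only [Pi.add_apply, Pi.smul_apply, smul_eq_mul]
    rw [Finset.sum_add_distrib, ← Finset.mul_sum, ← Finset.mul_sum, hA2, hB2]
    simpa using hab
  · simp only [Pi.add_apply, Pi.smul_apply, smul_eq_mul]
    calc ∑ j : Fin n, ((j:ℕ):ℝ) * (a * A i j + b * B i j)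
        = a * ∑ j : Fin n, ((j:ℕ):ℝ) * A i j + b * ∑ j : Fin n, ((j:ℕ):ℝ) * B i j := by
          rw [Finset.mul_sum, Finset.mul_sum, ← Finset.sum_add_distrib]
          exact Finset.sum_congr rfl fun j _ => by ring
      _ = x i := by rw [hA3, hB3]; linear_combination (x i) * hab

lemma mem_Icc_of_theta {n : ℕ} {x : Fin n → ℝ} {M : Fin n → Fin n → ℝ}
    (hM : M ∈ Theta n x) (i j : Fin n) : M i j ∈ Set.Icc (0:ℝ) 1 := by
  obtain ⟨h0, h1, -, -⟩ := hM
  refine ⟨h0 i j, ?_⟩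
  calc M i j ≤ ∑ j', M i j' :=
        Finset.single_le_sum (fun j' _ => h0 i j') (Finset.mem_univ j)
    _ = 1 := h1 i

lemma theta_isCompact (n : ℕ) (x : Fin n → ℝ) : IsCompact (Theta n x) := by
  have hcont : ∀ i j : Fin n, Continuous fun M : Fin n → Fin n → ℝ => M i j :=
    fun i j => (continuous_apply j).comp (continuous_apply i)
  have hclosed : IsClosed (Theta n x) := by
    have : Theta n x = (⋂ i, ⋂ j, {M : Fin n → Fin n → ℝ | 0 ≤ M i j}) ∩
        ((⋂ i, {M : Fin n → Fin n → ℝ | ∑ j, M i j = 1}) ∩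
        ((⋂ j, {M : Fin n → Fin n → ℝ | ∑ i, M i j = 1}) ∩
        (⋂ i, {M : Fin n → Fin n → ℝ | ∑ j : Fin n, ((j:ℕ):ℝ) * M i j = x i}))) := by
      ext M
      simp only [Theta, Set.mem_setOf_eq, Set.mem_inter_iff, Set.mem_iInter]
    rw [this]
    refine IsClosed.inter (isClosed_iInter fun i => isClosed_iInter fun j =>
        isClosed_le continuous_const (hcont i j)) (IsClosed.inter ?_ (IsClosed.inter ?_ ?_))
    · exact isClosed_iInter fun i => isClosed_eq
        (continuous_finset_sum _ fun j _ => hcont i j) continuous_const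
    · exact isClosed_iInter fun j => isClosed_eq
        (continuous_finset_sum _ fun i _ => hcont i j) continuous_const
    · exact isClosed_iInter fun i => isClosed_eq
        (continuous_finset_sum _ fun j _ => (continuous_const.mul (hcont i j))) continuous_const
  have hcomp : IsCompact (Set.pi Set.univ fun _ : Fin n =>
      Set.pi Set.univ fun _ : Fin n => Set.Icc (0:ℝ) 1) :=
    isCompact_univ_pi fun _ => isCompact_univ_pi fun _ => isCompact_Icc
  refine hcomp.of_isClosed_subset hclosed ?_
  intro M hM i _
  intro j _
  exact mem_Icc_of_theta hM i j

lemma entropyH_continuous (n : ℕ) : Continuous (entropyH n) := by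
  unfold entropyH
  exact continuous_finset_sum _ fun i _ => continuous_finset_sum _ fun j _ =>
    Real.continuous_mul_log.comp ((continuous_apply j).comp (continuous_apply i))


/-- Any minimizer of the entropy on `Theta n x` has positive entries,
provided a positive element exists. -/
lemma minimizer_pos {n : ℕ} {x : Fin n → ℝ} {M P : Fin n → Fin n → ℝ}
    (hM : M ∈ Theta n x) (hmin : ∀ N ∈ Theta n x, entropyH n M ≤ entropyH n N)
    (hP : P ∈ Theta n x) (hPpos : ∀ i j, 0 < P i j) : ∀ i j, 0 < M i j := by
  by_contra h
  push_neg at h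
  obtain ⟨i0, j0, hij⟩ := h
  have hM0 : M i0 j0 = 0 := le_antisymm hij (hM.1 i0 j0)
  set b := P i0 j0 with hb
  have hb0 : 0 < b := hPpos i0 j0
  have hb1 : b ≤ 1 := (mem_Icc_of_theta hP i0 j0).2
  set t := Real.exp (-(((n:ℝ)^2 + 1)/b)) with ht
  have ht0 : 0 < t := Real.exp_pos _
  have ht1 : t < 1 := by
    rw [ht]
    apply Real.exp_lt_one_iff.2
    have : 0 < ((n:ℝ)^2 + 1)/b := div_pos (by positivity) hb0
    linarith
  set N : Fin n → Fin n → ℝ := fun i j => (1-t) * M i j + t * P i j with hN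
  have hNmem : N ∈ Theta n x := by
    have hmem := theta_convex n x hM hP (by linarith : (0:ℝ) ≤ 1 - t) ht0.le (by ring)
    have heq : N = (1-t) • M + t • P := by
      funext i j
      simp only [hN, Pi.add_apply, Pi.smul_apply, smul_eq_mul]
    rw [heq]
    exact hmem
  have fsub : ∀ a : ℝ, 0 < a → a - 1 ≤ a * Real.log a := by
    intro a ha'
    have h1 := Real.log_le_sub_one_of_pos (inv_pos.2 ha')
    rw [Real.log_inv] at h1
    have h2 := mul_le_mul_of_nonneg_left h1 ha'.le
    have h3 : a * a⁻¹ = 1 := mul_inv_cancel₀ (ne_of_gt ha')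
    nlinarith
  have flb : ∀ a : ℝ, 0 ≤ a → a - 1 ≤ a * Real.log a := by
    intro a ha
    rcases eq_or_lt_of_le ha with rfl | ha'
    · simp
    · exact fsub a ha'
  have hkey : ∀ a c : ℝ, 0 ≤ a → a ≤ 1 → 0 ≤ c → c ≤ 1 →
      ((1-t)*a + t*c) * Real.log ((1-t)*a + t*c) ≤ a * Real.log a + t := by
    intro a c ha ha1 hc hc1
    have hconv := Real.convexOn_mul_log.2 (Set.mem_Ici.2 ha) (Set.mem_Ici.2 hc)
      (by linarith : (0:ℝ) ≤ 1 - t) ht0.le (by ring)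
    simp only [smul_eq_mul] at hconv
    have h1 : c * Real.log c ≤ 0 :=
      mul_nonpos_of_nonneg_of_nonpos hc (Real.log_nonpos hc hc1)
    have h2 : a - 1 ≤ a * Real.log a := flb a ha
    nlinarith
  have hkey0 : N i0 j0 * Real.log (N i0 j0) ≤ t * b * Real.log t := by
    have hval : N i0 j0 = t * b := by simp [hN, hM0]; exact Or.inl hb.symm
    rw [hval, Real.log_mul (ne_of_gt ht0) (ne_of_gt hb0)]
    have h1 : t * b * Real.log b ≤ 0 :=
      mul_nonpos_of_nonneg_of_nonpos (by positivity) (Real.log_nonpos hb0.le hb1)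
    nlinarith
  have hrow : ∀ i : Fin n, ∀ j : Fin n,
      N i j * Real.log (N i j) ≤ M i j * Real.log (M i j) + t := by
    intro i j
    exact hkey _ _ (mem_Icc_of_theta hM i j).1 (mem_Icc_of_theta hM i j).2
      (mem_Icc_of_theta hP i j).1 (mem_Icc_of_theta hP i j).2
  have hH : entropyH n N ≤ entropyH n M + (n:ℝ) * ((n:ℝ) * t) + t * b * Real.log t := by
    unfold entropyH
    have hrow0 : ∑ j, N i0 j * Real.log (N i0 j) ≤
        (∑ j, M i0 j * Real.log (M i0 j)) + (n:ℝ) * t + t * b * Real.log t := by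
      have e1 : ∑ j, N i0 j * Real.log (N i0 j) =
          (∑ j ∈ Finset.univ.erase j0, N i0 j * Real.log (N i0 j)) +
          N i0 j0 * Real.log (N i0 j0) :=
        (Finset.sum_erase_add _ _ (Finset.mem_univ j0)).symm
      have e2 : ∑ j, M i0 j * Real.log (M i0 j) =
          ∑ j ∈ Finset.univ.erase j0, M i0 j * Real.log (M i0 j) := by
        rw [← Finset.sum_erase_add _ _ (Finset.mem_univ j0), hM0]
        simp
      rw [e1, e2]
      have h3 : (∑ j ∈ Finset.univ.erase j0, N i0 j * Real.log (N i0 j)) ≤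
          ∑ j ∈ Finset.univ.erase j0, (M i0 j * Real.log (M i0 j) + t) :=
        Finset.sum_le_sum fun j _ => hrow i0 j
      have h4 : ∑ j ∈ Finset.univ.erase j0, (M i0 j * Real.log (M i0 j) + t) =
          (∑ j ∈ Finset.univ.erase j0, M i0 j * Real.log (M i0 j)) +
            ((Finset.univ.erase j0).card : ℝ) * t := by
        rw [Finset.sum_add_distrib, Finset.sum_const, nsmul_eq_mul]
      have h5 : ((Finset.univ.erase j0).card : ℝ) * t ≤ (n:ℝ) * t := by
        apply mul_le_mul_of_nonneg_right _ ht0.le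
        have := Finset.card_erase_of_mem (Finset.mem_univ j0)
        rw [this]
        simp only [Finset.card_univ, Fintype.card_fin]
        exact_mod_cast Nat.sub_le n 1
      linarith
    have hrows : ∀ i : Fin n, ∑ j, N i j * Real.log (N i j) ≤
        (∑ j, M i j * Real.log (M i j)) + (n:ℝ) * t +
          (if i = i0 then t * b * Real.log t else 0) := by
      intro i
      by_cases hi : i = i0
      · subst hi; simpa using hrow0
      · simp only [hi, if_false, add_zero]
        have h3 : ∑ j, N i j * Real.log (N i j) ≤
            ∑ j, (M i j * Real.log (M i j) + t) :=
          Finset.sum_le_sum fun j _ => hrow i j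
        rw [Finset.sum_add_distrib, Finset.sum_const, nsmul_eq_mul] at h3
        simp only [Finset.card_univ, Fintype.card_fin] at h3
        exact h3
    calc ∑ i, ∑ j, N i j * Real.log (N i j)
        ≤ ∑ i, ((∑ j, M i j * Real.log (M i j)) + (n:ℝ) * t +
            (if i = i0 then t * b * Real.log t else 0)) :=
          Finset.sum_le_sum fun i _ => hrows i
      _ = (∑ i, ∑ j, M i j * Real.log (M i j)) + (n:ℝ) * ((n:ℝ) * t) +
            t * b * Real.log t := by
          rw [Finset.sum_add_distrib, Finset.sum_add_distrib, Finset.sum_const,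
            nsmul_eq_mul, Finset.sum_ite_eq' Finset.univ i0]
          simp only [Finset.mem_univ, if_true, Finset.card_univ, Fintype.card_fin]
  have hneg : (n:ℝ) * ((n:ℝ) * t) + t * b * Real.log t = -t := by
    rw [ht, Real.log_exp]
    field_simp
    ring
  have hlt : entropyH n N < entropyH n M := by linarith
  exact absurd (hmin N hNmem) (not_le.2 hlt)

/-- For an irreducible score `x`, the entropy admits a unique minimizer on
`Θ_n(x)`, and all entries of this minimizer are strictly positive. -/
theorem entropy_unique_minimizer_of_irreducible (n : ℕ) (x : Fin n → ℝ)
    (hx : Monotone x)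
    (hsum : ∑ i, x i = (n * (n - 1) / 2 : ℝ))
    (hirr : ∀ k : ℕ, 1 ≤ k → k < n →
      (k * (k - 1) / 2 : ℝ) <
        ∑ i ∈ Finset.univ.filter (fun i : Fin n => (i : ℕ) < k), x i) :
    ∃ M : Fin n → Fin n → ℝ,
      M ∈ Theta n x ∧
      (∀ N ∈ Theta n x, entropyH n M ≤ entropyH n N) ∧
      (∀ i j, 0 < M i j) ∧
      (∀ M' ∈ Theta n x, (∀ N ∈ Theta n x, entropyH n M' ≤ entropyH n N) → M' = M) := by
  obtain ⟨P, hP, hPpos⟩ := exists_pos_theta n x hx hsum hirr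
  obtain ⟨M, hMmem, hMmin⟩ := (theta_isCompact n x).exists_isMinOn ⟨P, hP⟩
    (entropyH_continuous n).continuousOn
  have hmin : ∀ N ∈ Theta n x, entropyH n M ≤ entropyH n N := fun N hN => hMmin hN
  have hpos : ∀ i j, 0 < M i j := minimizer_pos hMmem hmin hP hPpos
  refine ⟨M, hMmem, hmin, hpos, ?_⟩
  intro M' hM' hM'min
  by_contra hne
  -- strict convexity: the midpoint has strictly smaller entropy
  have hNmem : (fun i j => (M' i j + M i j) / 2) ∈ Theta n x := by
    have := theta_convex n x hM' hMmem (by norm_num : (0:ℝ) ≤ 1/2)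
      (by norm_num : (0:ℝ) ≤ 1/2) (by norm_num)
    have heq : (fun i j => (M' i j + M i j) / 2) = (1/2:ℝ) • M' + (1/2:ℝ) • M := by
      funext i j
      simp only [Pi.add_apply, Pi.smul_apply, smul_eq_mul]
      ring
    rw [heq]
    exact this
  have hEq : entropyH n M' = entropyH n M :=
    le_antisymm (hM'min M hMmem) (hmin M' hM')
  have hij : ∃ i j, M' i j ≠ M i j := by
    by_contra h
    push_neg at h
    exact hne (funext fun i => funext fun j => h i j)
  obtain ⟨i0, j0, hij0⟩ := hij
  have hstrict : entropyH n (fun i j => (M' i j + M i j) / 2) <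
      (entropyH n M' + entropyH n M) / 2 := by
    have key : ∀ a b : ℝ, 0 ≤ a → 0 ≤ b →
        ((a + b)/2) * Real.log ((a + b)/2) ≤
          (a * Real.log a + b * Real.log b)/2 := by
      intro a b ha hb
      have := Real.convexOn_mul_log.2 (Set.mem_Ici.2 ha) (Set.mem_Ici.2 hb)
        (by norm_num : (0:ℝ) ≤ 1/2) (by norm_num : (0:ℝ) ≤ 1/2) (by norm_num)
      simp only [smul_eq_mul] at this
      calc ((a + b)/2) * Real.log ((a + b)/2)
          = ((1/2) * a + (1/2) * b) * Real.log ((1/2) * a + (1/2) * b) := by ring_nf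
        _ ≤ (1/2) * (a * Real.log a) + (1/2) * (b * Real.log b) := this
        _ = (a * Real.log a + b * Real.log b)/2 := by ring
    have keylt : ∀ a b : ℝ, 0 ≤ a → 0 ≤ b → a ≠ b →
        ((a + b)/2) * Real.log ((a + b)/2) <
          (a * Real.log a + b * Real.log b)/2 := by
      intro a b ha hb hne'
      have := Real.strictConvexOn_mul_log.2 (Set.mem_Ici.2 ha) (Set.mem_Ici.2 hb)
        hne' (by norm_num : (0:ℝ) < 1/2) (by norm_num : (0:ℝ) < 1/2) (by norm_num)
      simp only [smul_eq_mul] at this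
      calc ((a + b)/2) * Real.log ((a + b)/2)
          = ((1/2) * a + (1/2) * b) * Real.log ((1/2) * a + (1/2) * b) := by ring_nf
        _ < (1/2) * (a * Real.log a) + (1/2) * (b * Real.log b) := this
        _ = (a * Real.log a + b * Real.log b)/2 := by ring
    have h0' := hM'.1
    have h0 := hMmem.1
    have hrhs : (entropyH n M' + entropyH n M)/2 =
        ∑ i, ∑ j, (M' i j * Real.log (M' i j) + M i j * Real.log (M i j))/2 := by
      unfold entropyH
      rw [← Finset.sum_add_distrib, Finset.sum_div]
      exact Finset.sum_congr rfl fun i _ => by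
        rw [← Finset.sum_add_distrib, Finset.sum_div]
    rw [hrhs]
    unfold entropyH
    refine Finset.sum_lt_sum (fun i _ => Finset.sum_le_sum fun j _ =>
        key _ _ (h0' i j) (h0 i j)) ⟨i0, Finset.mem_univ i0, ?_⟩
    exact Finset.sum_lt_sum (fun j _ => key _ _ (h0' i0 j) (h0 i0 j))
      ⟨j0, Finset.mem_univ j0, keylt _ _ (h0' i0 j0) (h0 i0 j0) hij0⟩
  have : entropyH n M ≤ entropyH n (fun i j => (M' i j + M i j) / 2) :=
    hmin _ hNmem
  rw [hEq] at hstrict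
  linarith
end

section
/- Let x ∈ ℝ^n have nondecreasing coordinates with x majorized by (0,1,…,n−1), and suppose that for some 1 ≤ k < n one has ∑_{i=1}^k x_i = k(k−1)/2. Then every M ∈ Θ_n(x) is block diagonal across index k: m_{ij} = 0 whenever i ≤ k < j or j ≤ k < i. -/
open Finset

lemma sum_filter_lt_eq_range {n k : ℕ} (hk : k ≤ n) (g : ℕ → ℝ) :
    ∑ j ∈ Finset.univ.filter (fun j : Fin n => (j : ℕ) < k), g (j : ℕ)
      = ∑ m ∈ Finset.range k, g m := by
  rw [Finset.sum_filter]
  rw [Fin.sum_univ_eq_sum_range (fun m => if m < k then g m else 0) n]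
  rw [← Finset.sum_filter]
  congr 1
  ext m
  simp only [Finset.mem_filter, Finset.mem_range]
  omega

/-- **The reducible case.** If `x ≼ (0,1,…,n-1)` and the `k`-th majorization
inequality is an equality, then every matrix in `Θ_n(x)` is block diagonal
across index `k`. -/
theorem theta_block_diagonal_of_reducible (n k : ℕ) (x : Fin n → ℝ)
    (hx : Monotone x)
    (hsum : ∑ i, x i = (n * (n - 1) / 2 : ℝ))
    (hmaj : ∀ m : ℕ, m < n →
      (m * (m - 1) / 2 : ℝ) ≤
        ∑ i ∈ Finset.univ.filter (fun i : Fin n => (i : ℕ) < m), x i)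
    (hk1 : 1 ≤ k) (hk2 : k < n)
    (heq : ∑ i ∈ Finset.univ.filter (fun i : Fin n => (i : ℕ) < k), x i =
      (k * (k - 1) / 2 : ℝ)) :
    ∀ M ∈ Theta n x, ∀ i j : Fin n,
      (((i : ℕ) < k ∧ k ≤ (j : ℕ)) ∨ ((j : ℕ) < k ∧ k ≤ (i : ℕ))) →
      M i j = 0 := by
  intro M hM i j hij
  obtain ⟨hpos, hrow, hcol, hbar⟩ := hM
  set S : Finset (Fin n) := Finset.univ.filter (fun i : Fin n => (i : ℕ) < k) with hSdef
  set c : Fin n → ℝ := fun j => ∑ i ∈ S, M i j with hcdef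
  have hc0 : ∀ j, 0 ≤ c j := fun j => Finset.sum_nonneg fun i _ => hpos i j
  have hc1 : ∀ j, c j ≤ 1 := by
    intro j
    rw [← hcol j]
    exact Finset.sum_le_sum_of_subset_of_nonneg (Finset.subset_univ S)
      (fun i _ _ => hpos i j)
  have hcard : (S.card : ℝ) = k := by
    have := sum_filter_lt_eq_range (n := n) (k := k) hk2.le (fun _ => (1 : ℝ))
    simpa [hSdef] using this
  have hcsum : ∑ j, c j = (k : ℝ) := by
    have h : ∑ j, c j = ∑ i ∈ S, ∑ j, M i j := Finset.sum_comm
    rw [h]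
    simp only [hrow]
    simpa using hcard
  have hgauss : ∑ j ∈ S, ((j : ℕ) : ℝ) = (k : ℝ) * ((k : ℝ) - 1) / 2 := by
    have h1 := sum_filter_lt_eq_range (n := n) (k := k) hk2.le (fun m => (m : ℝ))
    have h2 : ((∑ m ∈ Finset.range k, m : ℕ) : ℝ) * 2 = (k : ℝ) * ((k : ℝ) - 1) := by
      calc ((∑ m ∈ Finset.range k, m : ℕ) : ℝ) * 2
          = (((∑ m ∈ Finset.range k, m) * 2 : ℕ) : ℝ) := by push_cast; ring
        _ = ((k * (k - 1) : ℕ) : ℝ) := by rw [Finset.sum_range_id_mul_two k]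
        _ = (k : ℝ) * ((k : ℝ) - 1) := by push_cast [Nat.cast_sub hk1]; ring
    rw [hSdef, h1]
    push_cast at h2
    linarith
  have hbsum : ∑ j : Fin n, ((j : ℕ) : ℝ) * c j = (k : ℝ) * ((k : ℝ) - 1) / 2 := by
    have hswap : ∑ j : Fin n, ((j : ℕ) : ℝ) * c j
        = ∑ i ∈ S, ∑ j : Fin n, ((j : ℕ) : ℝ) * M i j := by
      calc ∑ j : Fin n, ((j : ℕ) : ℝ) * c j
          = ∑ j : Fin n, ∑ i ∈ S, ((j : ℕ) : ℝ) * M i j := by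
            simp [hcdef, Finset.mul_sum]
        _ = ∑ i ∈ S, ∑ j : Fin n, ((j : ℕ) : ℝ) * M i j := Finset.sum_comm
    rw [hswap]
    simp only [hbar]
    exact heq
  -- D := mass of first-block rows outside first-block columns
  set D : ℝ := ∑ j ∈ Sᶜ, c j with hDdef
  have hD0 : 0 ≤ D := Finset.sum_nonneg fun j _ => hc0 j
  have hsplitc : ∑ j ∈ S, c j + D = (k : ℝ) := by
    rw [hDdef, Finset.sum_add_sum_compl]
    exact hcsum
  have hsplitb : ∑ j ∈ S, ((j : ℕ) : ℝ) * c j + ∑ j ∈ Sᶜ, ((j : ℕ) : ℝ) * c j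
      = (k : ℝ) * ((k : ℝ) - 1) / 2 := by
    rw [Finset.sum_add_sum_compl]
    exact hbsum
  -- lower bound on the off-block part
  have h1 : (k : ℝ) * D ≤ ∑ j ∈ Sᶜ, ((j : ℕ) : ℝ) * c j := by
    rw [hDdef, Finset.mul_sum]
    apply Finset.sum_le_sum
    intro j hj
    have hjk : k ≤ (j : ℕ) := by
      simp only [hSdef, Finset.mem_compl, Finset.mem_filter, Finset.mem_univ,
        true_and] at hj
      omega
    exact mul_le_mul_of_nonneg_right (by exact_mod_cast hjk) (hc0 j)
  -- lower bound on the in-block part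
  have h2 : ((k : ℝ) - 1) * (-D) + (k : ℝ) * ((k : ℝ) - 1) / 2
      ≤ ∑ j ∈ S, ((j : ℕ) : ℝ) * c j := by
    have hdiff : ∑ j ∈ S, (c j - 1) = -D := by
      rw [Finset.sum_sub_distrib]
      simp only [Finset.sum_const, nsmul_eq_mul, mul_one]
      rw [hcard]
      linarith
    have hterm : ∀ j ∈ S, ((k : ℝ) - 1) * (c j - 1) ≤ ((j : ℕ) : ℝ) * (c j - 1) := by
      intro j hj
      have hjk : (j : ℕ) ≤ k - 1 := by
        simp only [hSdef, Finset.mem_filter, Finset.mem_univ, true_and] at hj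
        omega
      have hjr : ((j : ℕ) : ℝ) ≤ (k : ℝ) - 1 := by
        have : ((j : ℕ) : ℝ) ≤ ((k - 1 : ℕ) : ℝ) := by exact_mod_cast hjk
        rwa [Nat.cast_sub hk1, Nat.cast_one] at this
      exact mul_le_mul_of_nonpos_right hjr (by linarith [hc1 j])
    have hL : ((k : ℝ) - 1) * (-D) ≤ ∑ j ∈ S, ((j : ℕ) : ℝ) * (c j - 1) := by
      calc ((k : ℝ) - 1) * (-D) = ∑ j ∈ S, ((k : ℝ) - 1) * (c j - 1) := by
            rw [← Finset.mul_sum, hdiff]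
        _ ≤ ∑ j ∈ S, ((j : ℕ) : ℝ) * (c j - 1) := Finset.sum_le_sum hterm
    have hexp : ∑ j ∈ S, ((j : ℕ) : ℝ) * (c j - 1)
        = ∑ j ∈ S, ((j : ℕ) : ℝ) * c j - (k : ℝ) * ((k : ℝ) - 1) / 2 := by
      rw [← hgauss, ← Finset.sum_sub_distrib]
      congr 1; ext j; ring
    linarith
  have hD : D = 0 := le_antisymm (by linarith) hD0
  -- c vanishes outside S and equals 1 on S
  have hczero : ∀ j ∈ Sᶜ, c j = 0 := by
    intro j hj
    have := (Finset.sum_eq_zero_iff_of_nonneg (fun j _ => hc0 j)).mp hD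
    exact this j hj
  have hcone : ∀ j ∈ S, c j = 1 := by
    have hsum1 : ∑ j ∈ S, (1 - c j) = 0 := by
      have : ∑ j ∈ S, c j = (k : ℝ) := by linarith
      rw [Finset.sum_sub_distrib]
      simp only [Finset.sum_const, nsmul_eq_mul, mul_one]
      rw [hcard, this]; ring
    intro j hj
    have := (Finset.sum_eq_zero_iff_of_nonneg
      (fun j _ => by linarith [hc1 j])).mp hsum1 j hj
    linarith
  -- conclude
  rcases hij with ⟨hik, hkj⟩ | ⟨hjk, hki⟩
  · have hjS : j ∈ Sᶜ := by
      simp only [hSdef, Finset.mem_compl, Finset.mem_filter, Finset.mem_univ, true_and]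
      omega
    have hiS : i ∈ S := by
      simp only [hSdef, Finset.mem_filter, Finset.mem_univ, true_and]; exact hik
    have := (Finset.sum_eq_zero_iff_of_nonneg (fun i' _ => hpos i' j)).mp
      (hczero j hjS) i hiS
    exact this
  · have hiS : i ∈ Sᶜ := by
      simp only [hSdef, Finset.mem_compl, Finset.mem_filter, Finset.mem_univ, true_and]
      omega
    have hjS : j ∈ S := by
      simp only [hSdef, Finset.mem_filter, Finset.mem_univ, true_and]; exact hjk
    have hrest : ∑ i' ∈ Sᶜ, M i' j = 0 := by
      have h := Finset.sum_add_sum_compl S (fun i' => M i' j)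
      rw [hcol j] at h
      have := hcone j hjS
      simp only [hcdef] at this
      linarith
    exact (Finset.sum_eq_zero_iff_of_nonneg (fun i' _ => hpos i' j)).mp hrest i hiS
end

section
/- Let P = (p_{ij})_{1≤i,j≤n} be a matrix with entries in [0,1] such that p_{ii} = 1/2 for all i and p_{ij} + p_{ji} = 1 for all i, j. Then P satisfies strong stochastic transitivity if and only if both of the following hold: (a) there exists a permutation σ of {1,…,n} such that the relabelled matrix (p_{σ(i)σ(j)})_{i,j} is monotonic, i.e. p_{σ(i)σ(j)} ≥ p_{σ(i)σ(k)} whenever j < k; and (b) for all i, j, if p_{ij} = 1/2 then p_{ik} = p_{jk} for every k. Moreover, a permutation σ is admissible in (a) if and only if i < j implies p_{σ(i)σ(j)} ≤ 1/2. -/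
open Finset

private lemma sst_star {n : ℕ} (P : Fin n → Fin n → ℝ)
    (hsym : ∀ i j, P i j + P j i = 1)
    (hSST : ∀ i j k : Fin n, 1 / 2 ≤ P i j → 1 / 2 ≤ P j k →
        max (P i j) (P j k) ≤ P i k) :
    ∀ i j k : Fin n, P j k ≤ 1 / 2 → P i k ≤ P i j := by
  intro i j k hjk
  have hkj : 1 / 2 ≤ P k j := by have := hsym j k; linarith
  rcases le_or_gt (1 / 2) (P i k) with h | h
  · exact le_trans (le_max_left _ _) (hSST i k j h hkj)
  · rcases le_or_gt (1 / 2) (P i j) with h2 | h2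
    · linarith
    · have hji : 1 / 2 ≤ P j i := by have := hsym i j; linarith
      have hle : P j i ≤ P k i := le_trans (le_max_right _ _) (hSST k j i hkj hji)
      have e1 := hsym i j
      have e2 := hsym i k
      linarith

/-- **SST versus monotonicity.** For a generalized tournament matrix
`P ∈ G'_n` (entries in `[0,1]`, diagonal `1/2`, `p_{ij} + p_{ji} = 1`),
strong stochastic transitivity holds iff (a) some relabelling of `P` is
monotonic and (b) `p_{ij} = 1/2` implies `p_{ik} = p_{jk}` for all `k`.
Moreover, under SST a relabelling `σ` is admissible in (a) iff `i < j`
implies `p_{σ(i)σ(j)} ≤ 1/2`. -/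
theorem SST_iff_monotonic_relabelling (n : ℕ) (P : Fin n → Fin n → ℝ)
    (hrange : ∀ i j, 0 ≤ P i j ∧ P i j ≤ 1)
    (hdiag : ∀ i, P i i = 1 / 2)
    (hsym : ∀ i j, P i j + P j i = 1) :
    ((∀ i j k : Fin n, 1 / 2 ≤ P i j → 1 / 2 ≤ P j k →
        max (P i j) (P j k) ≤ P i k) ↔
      ((∃ σ : Equiv.Perm (Fin n),
          ∀ i j k : Fin n, j < k → P (σ i) (σ k) ≤ P (σ i) (σ j)) ∧
        (∀ i j : Fin n, P i j = 1 / 2 → ∀ k, P i k = P j k))) ∧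
    ((∀ i j k : Fin n, 1 / 2 ≤ P i j → 1 / 2 ≤ P j k →
        max (P i j) (P j k) ≤ P i k) →
      ∀ σ : Equiv.Perm (Fin n),
        ((∀ i j k : Fin n, j < k → P (σ i) (σ k) ≤ P (σ i) (σ j)) ↔
          (∀ i j : Fin n, i < j → P (σ i) (σ j) ≤ 1 / 2))) := by
  constructor
  · constructor
    · intro hSST
      have hstar := sst_star P hsym hSST
      constructor
      · -- existence of a monotonic relabelling
        set S : Fin n → ℝ := fun x => ∑ i, P i x with hS
        have hSmono : ∀ j k : Fin n, S k ≤ S j → P j k ≤ 1 / 2 := by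
          intro j k hjk
          by_contra h
          push_neg at h
          have hkj : P k j ≤ 1 / 2 := by have := hsym j k; linarith
          have hle : ∀ i, P i j ≤ P i k := fun i => hstar i k j hkj
          have hstrict : S j < S k := by
            refine Finset.sum_lt_sum (fun i _ => hle i) ⟨j, Finset.mem_univ j, ?_⟩
            rw [hdiag j]; exact h
          linarith
        refine ⟨Tuple.sort (fun i => -S i), ?_⟩
        intro i j k hjk
        have hm := Tuple.monotone_sort (fun i => -S i) (le_of_lt hjk)
        simp only [Function.comp] at hm
        have hhalf : P (Tuple.sort (fun i => -S i) j) (Tuple.sort (fun i => -S i) k) ≤ 1 / 2 :=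
          hSmono _ _ (by linarith)
        exact hstar _ _ _ hhalf
      · intro i j hij k
        have h1 : P i j ≤ 1 / 2 := le_of_eq hij
        have h2 : P j i ≤ 1 / 2 := by have := hsym i j; linarith
        have e1 : P k j ≤ P k i := hstar k i j h1
        have e2 : P k i ≤ P k j := hstar k j i h2
        have := hsym k i
        have := hsym k j
        have := hsym i k
        have := hsym j k
        linarith
    · rintro ⟨⟨σ, hmono⟩, heq⟩ i j k hij hjk
      obtain ⟨a, rfl⟩ : ∃ a, i = σ a := ⟨σ.symm i, (σ.apply_symm_apply i).symm⟩
      obtain ⟨b, rfl⟩ : ∃ b, j = σ b := ⟨σ.symm j, (σ.apply_symm_apply j).symm⟩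
      obtain ⟨c, rfl⟩ : ∃ c, k = σ c := ⟨σ.symm k, (σ.apply_symm_apply k).symm⟩
      have hhalf : ∀ x y : Fin n, x < y → P (σ x) (σ y) ≤ 1 / 2 := by
        intro x y hxy
        have := hmono x x y hxy
        rw [hdiag (σ x)] at this
        exact this
      refine max_le ?_ ?_
      · -- P (σ a) (σ b) ≤ P (σ a) (σ c)
        rcases lt_trichotomy b c with h | h | h
        · -- b < c : rows/cols of σ b and σ c coincide
          have heq2 : P (σ b) (σ c) = 1 / 2 := le_antisymm (hhalf b c h) hjk
          have hrows := heq (σ b) (σ c) heq2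
          have ec : P (σ a) (σ c) = P (σ a) (σ b) := by
            have := hsym (σ a) (σ c)
            have := hsym (σ a) (σ b)
            have := hsym (σ b) (σ a)
            have hr := hrows (σ a)
            linarith
          linarith
        · rw [h]
        · exact hmono a c b h
      · -- P (σ b) (σ c) ≤ P (σ a) (σ c)
        rcases lt_trichotomy a b with h | h | h
        · have heq2 : P (σ a) (σ b) = 1 / 2 := le_antisymm (hhalf a b h) hij
          have hrows := heq (σ a) (σ b) heq2
          rw [hrows (σ c)]
        · rw [h]
        · -- b < a : column c is nondecreasing
          have hm := hmono c b a h
          have := hsym (σ c) (σ a)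
          have := hsym (σ c) (σ b)
          have := hsym (σ b) (σ c)
          have := hsym (σ a) (σ c)
          linarith
  · intro hSST σ
    constructor
    · intro hmono i j hij
      have := hmono i i j hij
      rw [hdiag (σ i)] at this
      exact this
    · intro hhalf i j k hjk
      exact sst_star P hsym hSST _ _ _ (hhalf j k hjk)
end

section
/- Let P = (p_{ij})_{1≤i,j≤n} be a matrix with entries in [0,1] such that p_{ii} = 1/2 for all i and p_{ij} + p_{ji} = 1 for all i, j, and suppose P satisfies strong stochastic transitivity. Then for all i, j: p_{ij} ≤ 1/2 if and only if ∑_{k=1}^n p_{ik} ≤ ∑_{k=1}^n p_{jk}. In other words, the results-based preorder (T_i ≤_P T_j iff p_{ij} ≤ 1/2) coincides with the score-based preorder (T_i ≤_x T_j iff x_i ≤ x_j, where x_i = ∑_k p_{ik}). -/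
open Finset

theorem SST_key (n : ℕ) (P : Fin n → Fin n → ℝ)
    (hsym : ∀ i j, P i j + P j i = 1)
    (hsst : ∀ i j k : Fin n, 1 / 2 ≤ P i j → 1 / 2 ≤ P j k →
      max (P i j) (P j k) ≤ P i k)
    (i j : Fin n) (hij : P i j ≤ 1 / 2) : ∀ k, P i k ≤ P j k := by
  have hji : 1 / 2 ≤ P j i := by linarith [hsym i j]
  intro k
  rcases le_or_gt (1 / 2) (P i k) with h1 | h1
  · exact le_trans (le_max_right (P j i) (P i k)) (hsst j i k hji h1)
  · rcases le_or_gt (1 / 2) (P j k) with h2 | h2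
    · linarith
    · have hkj : 1 / 2 ≤ P k j := by linarith [hsym j k]
      have hm := le_trans (le_max_left (P k j) (P j i)) (hsst k j i hkj hji)
      linarith [hsym i k, hsym j k]

/-- Under strong stochastic transitivity, the results-based preorder
(`T_i ≤_P T_j` iff `p_{ij} ≤ 1/2`) coincides with the score-based preorder
(`x_i ≤ x_j` where `x_i = ∑_k p_{ik}`). -/
theorem SST_results_preorder_eq_score_preorder (n : ℕ) (P : Fin n → Fin n → ℝ)
    (hrange : ∀ i j, 0 ≤ P i j ∧ P i j ≤ 1)
    (hdiag : ∀ i, P i i = 1 / 2)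
    (hsym : ∀ i j, P i j + P j i = 1)
    (hsst : ∀ i j k : Fin n, 1 / 2 ≤ P i j → 1 / 2 ≤ P j k →
      max (P i j) (P j k) ≤ P i k) :
    ∀ i j : Fin n, (P i j ≤ 1 / 2 ↔ ∑ k, P i k ≤ ∑ k, P j k) := by
  intro i j
  constructor
  · intro hij
    exact Finset.sum_le_sum fun k _ => SST_key n P hsym hsst i j hij k
  · intro hsum
    by_contra h
    push_neg at h
    have hji : P j i ≤ 1 / 2 := by linarith [hsym i j]
    have hlt : ∑ k, P j k < ∑ k, P i k := by
      apply Finset.sum_lt_sum (fun k _ => SST_key n P hsym hsst j i hji k)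
      exact ⟨j, Finset.mem_univ j, by rw [hdiag j]; linarith⟩
    linarith
end
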